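/- arXiv:1711.08418 — 4 statements merged into one kernel-verified Lean document; each statement's English description precedes it below -/
import Mathlib

section
/- Let V be a real Hilbert space, A : V → V' linear, bounded, and coercive, j : V → ℝ convex, continuous, and nonnegative, and f ∈ V'. Then there exists a unique u ∈ V satisfying the variational inequality of the second kind: ⟨Au, v−u⟩ + j(v) − j(u) ≥ ⟨f, v−u⟩ for all v ∈ V. -/
open scoped RealInnerProductSpace
open Filter

/-- Existence and uniqueness of the proximal point (solution of the elementary
variational inequality of the second kind with A = identity). -/
lemma prox_exists
    {V : Type*} [NormedAddCommGroup V] [InnerProductSpace ℝ V] [CompleteSpace V]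
    (j : V → ℝ) (hjconv : ConvexOn ℝ Set.univ j) (hjcont : Continuous j)
    (hjnonneg : ∀ v : V, 0 ≤ j v) (x : V) :
    ∃! u : V, ∀ v : V, ⟪u, v - u⟫ + j v - j u ≥ ⟪x, v - u⟫ := by
  set F : V → ℝ := fun v => ‖v - x‖ ^ 2 / 2 + j v with hF
  have hFc : Continuous F := by
    apply Continuous.add _ hjcont
    exact (((continuous_id.sub continuous_const).norm.pow 2).div_const 2)
  have hF0 : ∀ v, 0 ≤ F v := fun v => add_nonneg (by positivity) (hjnonneg v)
  have hbdd : BddBelow (Set.range F) := ⟨0, by rintro y ⟨v, rfl⟩; exact hF0 v⟩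
  have hne : (Set.range F).Nonempty := ⟨F 0, ⟨0, rfl⟩⟩
  set m := sInf (Set.range F) with hm
  have hmle : ∀ v, m ≤ F v := fun v => csInf_le hbdd ⟨v, rfl⟩
  -- key parallelogram-convexity inequality
  have key : ∀ u v : V, ‖u - v‖ ^ 2 / 4 ≤ F u + F v - 2 * F ((1/2 : ℝ) • (u + v)) := by
    intro u v
    have par := parallelogram_law_with_norm ℝ (u - x) (v - x)
    have h1 : (u - x) + (v - x) = (2 : ℝ) • ((1/2 : ℝ) • (u + v) - x) := by module
    have h2 : (u - x) - (v - x) = u - v := by abel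
    rw [h1, h2, norm_smul] at par
    have hj : j ((1/2 : ℝ) • (u + v)) ≤ (1/2 : ℝ) * j u + (1/2 : ℝ) * j v := by
      have := hjconv.2 (Set.mem_univ u) (Set.mem_univ v)
        (by norm_num : (0:ℝ) ≤ 1/2) (by norm_num : (0:ℝ) ≤ 1/2) (by norm_num)
      simpa [smul_add] using this
    simp only [Real.norm_ofNat] at par
    simp only [hF]
    nlinarith [par, hj]
  -- minimizing sequence
  have hseq : ∀ n : ℕ, ∃ u : V, F u < m + 1 / (n + 1) := by
    intro n
    have hpos : (0:ℝ) < 1 / (n + 1) := by positivity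
    obtain ⟨y, ⟨w, rfl⟩, hy⟩ := exists_lt_of_csInf_lt hne (by linarith : m < m + 1/(n+1))
    exact ⟨w, hy⟩
  choose us hus using hseq
  have hcauchy : CauchySeq us := by
    rw [Metric.cauchySeq_iff]
    intro ε hε
    obtain ⟨N, hN⟩ := exists_nat_gt (8 / ε ^ 2)
    refine ⟨N, fun p hp q hq => ?_⟩
    have hkey := key (us p) (us q)
    have hmid := hmle ((1/2 : ℝ) • (us p + us q))
    have h1 : (1:ℝ) / (p + 1) ≤ 1 / (N + 1) := by
      apply one_div_le_one_div_of_le (by positivity)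
      exact_mod_cast Nat.succ_le_succ hp
    have h2 : (1:ℝ) / (q + 1) ≤ 1 / (N + 1) := by
      apply one_div_le_one_div_of_le (by positivity)
      exact_mod_cast Nat.succ_le_succ hq
    have hd2 : ‖us p - us q‖ ^ 2 ≤ 8 / (N + 1) := by
      have e8 : (8:ℝ) / (N + 1) = 8 * (1 / (N + 1)) := by ring
      have := hus p; have := hus q
      rw [e8]; linarith
    have hNpos : (0:ℝ) < N + 1 := by positivity
    have h8 : 8 / ((N:ℝ) + 1) < ε ^ 2 := by
      rw [div_lt_iff₀ hNpos]
      have hε2 : (0:ℝ) < ε ^ 2 := by positivity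
      rw [div_lt_iff₀ hε2] at hN
      nlinarith
    rw [dist_eq_norm]
    exact lt_of_pow_lt_pow_left₀ 2 (le_of_lt hε) (lt_of_le_of_lt hd2 h8)
  obtain ⟨u, hu_lim⟩ := cauchySeq_tendsto_of_complete hcauchy
  have hFu : F u = m := by
    have hl1 : Tendsto (fun n => F (us n)) atTop (nhds (F u)) :=
      (hFc.continuousAt.tendsto).comp hu_lim
    have hl2 : Tendsto (fun n : ℕ => F (us n)) atTop (nhds m) := by
      have hup : Tendsto (fun n : ℕ => m + 1 / (n + 1 : ℝ)) atTop (nhds (m + 0)) :=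
        tendsto_const_nhds.add tendsto_one_div_add_atTop_nhds_zero_nat
      rw [add_zero] at hup
      exact tendsto_of_tendsto_of_tendsto_of_le_of_le tendsto_const_nhds hup
        (fun n => hmle (us n)) (fun n => le_of_lt (hus n))
    exact tendsto_nhds_unique hl1 hl2
  have hmin : ∀ v, F u ≤ F v := fun v => hFu ▸ hmle v
  -- minimizer satisfies the variational inequality
  have hVI : ∀ v : V, ⟪u, v - u⟫ + j v - j u ≥ ⟪x, v - u⟫ := by
    intro v
    have step : ∀ t : ℝ, 0 < t → t ≤ 1 →
        0 ≤ ⟪u - x, v - u⟫ + t / 2 * ‖v - u‖ ^ 2 + (j v - j u) := by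
      intro t ht ht1
      have h1 := hmin (u + t • (v - u))
      have hjt : j (u + t • (v - u)) ≤ (1 - t) * j u + t * j v := by
        have heq : u + t • (v - u) = (1 - t) • u + t • v := by module
        rw [heq]
        exact hjconv.2 (Set.mem_univ u) (Set.mem_univ v) (by linarith) (le_of_lt ht) (by ring)
      have hnorm : ‖u + t • (v - u) - x‖ ^ 2
          = ‖u - x‖ ^ 2 + 2 * t * ⟪u - x, v - u⟫ + t ^ 2 * ‖v - u‖ ^ 2 := by
        have heq : u + t • (v - u) - x = (u - x) + t • (v - u) := by abel
        rw [heq, norm_add_sq_real, real_inner_smul_right, norm_smul,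
          Real.norm_eq_abs, abs_of_pos ht]
        ring
      simp only [hF] at h1
      rw [hnorm] at h1
      nlinarith [h1, hjt, ht]
    have hlim : Tendsto (fun n : ℕ =>
        ⟪u - x, v - u⟫ + (1 / (n + 1 : ℝ)) / 2 * ‖v - u‖ ^ 2 + (j v - j u)) atTop
        (nhds (⟪u - x, v - u⟫ + 0 / 2 * ‖v - u‖ ^ 2 + (j v - j u))) := by
      apply Tendsto.add _ tendsto_const_nhds
      apply Tendsto.add tendsto_const_nhds
      exact (tendsto_one_div_add_atTop_nhds_zero_nat.div_const 2).mul_const _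
    have h0 : 0 ≤ ⟪u - x, v - u⟫ + 0 / 2 * ‖v - u‖ ^ 2 + (j v - j u) := by
      refine ge_of_tendsto' hlim fun n => ?_
      have hn1 : (0:ℝ) < 1 / (n + 1) := by positivity
      have hn2 : (1:ℝ) / (n + 1) ≤ 1 := by
        rw [div_le_one (by positivity)]; norm_num
      exact step _ hn1 hn2
    have hexp : ⟪u - x, v - u⟫ = ⟪u, v - u⟫ - ⟪x, v - u⟫ := inner_sub_left _ _ _
    rw [hexp] at h0
    simp only [zero_div, zero_mul, add_zero] at h0
    linarith
  refine ⟨u, hVI, fun y hy => ?_⟩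
  have hy1 := hy u
  have hu1 := hVI y
  have hsum : ⟪y, u - y⟫ + ⟪u, y - u⟫ ≥ ⟪x, u - y⟫ + ⟪x, y - u⟫ := by linarith
  have hz : ⟪x, u - y⟫ + ⟪x, y - u⟫ = 0 := by
    rw [← inner_add_right]; simp
  have hn : ⟪y, u - y⟫ + ⟪u, y - u⟫ = -‖u - y‖ ^ 2 := by
    have : ⟪y, u - y⟫ + ⟪u, y - u⟫ = -⟪u - y, u - y⟫ := by
      simp only [inner_sub_left, inner_sub_right]; ring
    rw [this, real_inner_self_eq_norm_sq]
  rw [hz, hn] at hsum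
  have : ‖u - y‖ ^ 2 ≤ 0 := by linarith
  have : u - y = 0 := by
    have := le_antisymm this (by positivity)
    simpa [pow_eq_zero_iff] using this
  have : u = y := by rwa [sub_eq_zero] at this
  exact this.symm

/-- Nonexpansiveness of the proximal map. -/
lemma prox_contract
    {V : Type*} [NormedAddCommGroup V] [InnerProductSpace ℝ V]
    (j : V → ℝ) (x₁ x₂ u₁ u₂ : V)
    (h₁ : ∀ v : V, ⟪u₁, v - u₁⟫ + j v - j u₁ ≥ ⟪x₁, v - u₁⟫)
    (h₂ : ∀ v : V, ⟪u₂, v - u₂⟫ + j v - j u₂ ≥ ⟪x₂, v - u₂⟫) :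
    ‖u₁ - u₂‖ ≤ ‖x₁ - x₂‖ := by
  have ha := h₁ u₂
  have hb := h₂ u₁
  have hsum : ⟪u₁, u₂ - u₁⟫ + ⟪u₂, u₁ - u₂⟫ ≥ ⟪x₁, u₂ - u₁⟫ + ⟪x₂, u₁ - u₂⟫ := by linarith
  have hl : ⟪u₁, u₂ - u₁⟫ + ⟪u₂, u₁ - u₂⟫ = -‖u₁ - u₂‖ ^ 2 := by
    have : ⟪u₁, u₂ - u₁⟫ + ⟪u₂, u₁ - u₂⟫ = -⟪u₁ - u₂, u₁ - u₂⟫ := by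
      simp only [inner_sub_left, inner_sub_right]; ring
    rw [this, real_inner_self_eq_norm_sq]
  have hr : ⟪x₁, u₂ - u₁⟫ + ⟪x₂, u₁ - u₂⟫ = -⟪x₁ - x₂, u₁ - u₂⟫ := by
    simp only [inner_sub_left, inner_sub_right]; ring
  rw [hl, hr] at hsum
  have hsq : ‖u₁ - u₂‖ ^ 2 ≤ ⟪x₁ - x₂, u₁ - u₂⟫ := by linarith
  have hcs : ⟪x₁ - x₂, u₁ - u₂⟫ ≤ ‖x₁ - x₂‖ * ‖u₁ - u₂‖ := real_inner_le_norm _ _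
  nlinarith [norm_nonneg (u₁ - u₂), norm_nonneg (x₁ - x₂)]

set_option maxHeartbeats 1000000 in
/-- Existence and uniqueness of the solution of the variational inequality of the second kind. -/
theorem stmt_2
    {V : Type*} [NormedAddCommGroup V] [InnerProductSpace ℝ V] [CompleteSpace V]
    (A : V →L[ℝ] (V →L[ℝ] ℝ)) (c : ℝ) (hc : 0 < c)
    (hcoer : ∀ v : V, c * ‖v‖ ^ 2 ≤ A v v)
    (j : V → ℝ) (hjconv : ConvexOn ℝ Set.univ j) (hjcont : Continuous j)
    (hjnonneg : ∀ v : V, 0 ≤ j v)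
    (f : V →L[ℝ] ℝ) :
    ∃! u : V, ∀ v : V, A u (v - u) + j v - j u ≥ f (v - u) := by
  classical
  -- Riesz representations
  set B : V → V := fun w => (InnerProductSpace.toDual ℝ V).symm (A w) with hBdef
  set bf : V := (InnerProductSpace.toDual ℝ V).symm f with hbfdef
  have hB : ∀ w v : V, ⟪B w, v⟫ = A w v := fun w v =>
    InnerProductSpace.toDual_symm_apply
  have hbf : ∀ v : V, ⟪bf, v⟫ = f v := fun v => InnerProductSpace.toDual_symm_apply
  have hBsub : ∀ w₁ w₂ : V, B w₁ - B w₂ = B (w₁ - w₂) := by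
    intro w₁ w₂
    simp only [hBdef, map_sub]
  have hBnorm : ∀ w : V, ‖B w‖ ≤ ‖A‖ * ‖w‖ := by
    intro w
    rw [hBdef]
    simp only [LinearIsometryEquiv.norm_map]
    exact A.le_opNorm w
  set M : ℝ := ‖A‖ + c with hMdef
  have hM : 0 < M := by positivity
  have hBM : ∀ w : V, ‖B w‖ ≤ M * ‖w‖ := fun w =>
    le_trans (hBnorm w) (by nlinarith [norm_nonneg w, hc.le])
  set ρ : ℝ := c / M ^ 2 with hρdef
  have hρ : 0 < ρ := by positivity
  -- the scaled functional
  set jρ : V → ℝ := fun v => ρ * j v with hjρ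
  have hjρconv : ConvexOn ℝ Set.univ jρ := by
    refine ⟨convex_univ, fun u _ v _ a b ha hb hab => ?_⟩
    have h := hjconv.2 (Set.mem_univ u) (Set.mem_univ v) ha hb hab
    simp only [smul_eq_mul] at h
    have h2 := mul_le_mul_of_nonneg_left h hρ.le
    simp only [hjρ, smul_eq_mul]
    nlinarith [h2]
  have hjρcont : Continuous jρ := continuous_const.mul hjcont
  have hjρnn : ∀ v, 0 ≤ jρ v := fun v => mul_nonneg hρ.le (hjnonneg v)
  -- the proximal map
  choose P hP using fun x => (prox_exists jρ hjρconv hjρcont hjρnn x).exists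
  set g : V → V := fun w => P (w - ρ • B w + ρ • bf) with hg
  -- contraction constant
  set K : ℝ := 1 - c ^ 2 / M ^ 2 with hK
  have hK0 : 0 ≤ K := by
    rw [hK]
    have hcM : c ≤ M := by simp only [hMdef]; nlinarith [norm_nonneg A]
    have : c ^ 2 ≤ M ^ 2 := by nlinarith
    have : c ^ 2 / M ^ 2 ≤ 1 := by
      rw [div_le_one (by positivity)]; exact this
    linarith
  have hK1 : K < 1 := by
    rw [hK]
    have : 0 < c ^ 2 / M ^ 2 := by positivity
    linarith
  -- the contraction estimate
  have hcontr : ∀ w₁ w₂ : V, ‖g w₁ - g w₂‖ ≤ Real.sqrt K * ‖w₁ - w₂‖ := by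
    intro w₁ w₂
    have h1 : ‖g w₁ - g w₂‖ ≤ ‖(w₁ - ρ • B w₁ + ρ • bf) - (w₂ - ρ • B w₂ + ρ • bf)‖ :=
      prox_contract jρ _ _ _ _ (hP _) (hP _)
    set d : V := w₁ - w₂ with hd
    have heq : (w₁ - ρ • B w₁ + ρ • bf) - (w₂ - ρ • B w₂ + ρ • bf) = d - ρ • B d := by
      rw [hd, ← hBsub]
      module
    rw [heq] at h1
    have hsq : ‖d - ρ • B d‖ ^ 2 ≤ K * ‖d‖ ^ 2 := by
      have hexp : ‖d - ρ • B d‖ ^ 2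
          = ‖d‖ ^ 2 - 2 * (ρ * ⟪B d, d⟫) + ρ ^ 2 * ‖B d‖ ^ 2 := by
        rw [norm_sub_sq_real, real_inner_smul_right, norm_smul, Real.norm_eq_abs,
          abs_of_pos hρ, real_inner_comm]
        ring
      have hco : c * ‖d‖ ^ 2 ≤ ⟪B d, d⟫ := by rw [hB]; exact hcoer d
      have hbd : ‖B d‖ ^ 2 ≤ M ^ 2 * ‖d‖ ^ 2 := by
        have := hBM d
        nlinarith [norm_nonneg (B d), norm_nonneg d, mul_nonneg hM.le (norm_nonneg d)]
      have hval : ρ * (M ^ 2) = c := by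
        rw [hρdef]; field_simp
      rw [hexp, hK]
      have hρM : ρ ^ 2 * ‖B d‖ ^ 2 ≤ ρ ^ 2 * (M ^ 2 * ‖d‖ ^ 2) := by nlinarith [sq_nonneg ρ]
      have hKval : (1 - c ^ 2 / M ^ 2) = 1 - ρ * c := by
        rw [hρdef]; field_simp
      rw [hKval]
      have e1 : 2 * ρ * (c * ‖d‖ ^ 2) ≤ 2 * ρ * ⟪B d, d⟫ :=
        mul_le_mul_of_nonneg_left hco (by positivity)
      have e2 : ρ ^ 2 * (M ^ 2 * ‖d‖ ^ 2) = ρ * c * ‖d‖ ^ 2 := by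
        rw [← hval]; ring
      rw [e2] at hρM
      nlinarith [e1, hρM]
    calc ‖g w₁ - g w₂‖ ≤ ‖d - ρ • B d‖ := h1
      _ = Real.sqrt (‖d - ρ • B d‖ ^ 2) := by rw [Real.sqrt_sq (norm_nonneg _)]
      _ ≤ Real.sqrt (K * ‖d‖ ^ 2) := Real.sqrt_le_sqrt hsq
      _ = Real.sqrt K * ‖d‖ := by
          rw [Real.sqrt_mul hK0, Real.sqrt_sq (norm_nonneg _)]
  -- Banach fixed point
  set k : NNReal := ⟨Real.sqrt K, Real.sqrt_nonneg K⟩ with hk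
  have hklt : k < 1 := by
    rw [← NNReal.coe_lt_coe]
    simp only [hk, NNReal.coe_one, NNReal.coe_mk]
    calc Real.sqrt K < Real.sqrt 1 :=
      Real.sqrt_lt_sqrt hK0 hK1
      _ = 1 := Real.sqrt_one
  have hlip : LipschitzWith k g := by
    apply LipschitzWith.of_dist_le_mul
    intro w₁ w₂
    rw [dist_eq_norm, dist_eq_norm]
    exact hcontr w₁ w₂
  have hcw : ContractingWith k g := ⟨hklt, hlip⟩
  haveI : Nonempty V := ⟨0⟩
  set u : V := ContractingWith.fixedPoint g hcw with hu
  have hfix : P (u - ρ • B u + ρ • bf) = u := hcw.fixedPoint_isFixedPt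
  -- u solves the VI
  have hsol : ∀ v : V, A u (v - u) + j v - j u ≥ f (v - u) := by
    intro v
    have h := hP (u - ρ • B u + ρ • bf) v
    rw [hfix] at h
    have hrhs : ⟪u - ρ • B u + ρ • bf, v - u⟫
        = ⟪u, v - u⟫ - ρ * (A u (v - u)) + ρ * (f (v - u)) := by
      rw [inner_add_left, inner_sub_left, real_inner_smul_left, real_inner_smul_left,
        hB, hbf]
    rw [hrhs] at h
    simp only [hjρ] at h
    nlinarith [h, hρ]
  refine ⟨u, hsol, fun y hy => ?_⟩
  -- uniqueness
  have h1 := hy u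
  have h2 := hsol y
  have hf0 : f (u - y) + f (y - u) = 0 := by rw [← map_add]; simp
  have hadd : A y (u - y) + A u (y - u) ≥ 0 := by linarith
  have hexp : A y (u - y) + A u (y - u) = -(A (y - u) (y - u)) := by
    simp only [map_sub, ContinuousLinearMap.sub_apply]
    ring
  rw [hexp] at hadd
  have hco := hcoer (y - u)
  have : c * ‖y - u‖ ^ 2 ≤ 0 := by linarith
  have hnz : ‖y - u‖ ^ 2 ≤ 0 := by nlinarith
  have : y - u = 0 := by
    have := le_antisymm hnz (by positivity)
    simpa [pow_eq_zero_iff] using this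
  rwa [sub_eq_zero] at this
end

section
/- Let V be a real Hilbert space compactly embedded in a Hilbert space H (identified with its dual, so V ↪ H ↪ V'), A : V → V' linear, bounded, coercive, and weakly sequentially continuous, and j : V → ℝ convex and continuous. Suppose fₙ ⇀ f weakly in H and uₙ ⇀ u weakly in V, where each uₙ solves the variational inequality ⟨Auₙ, v−uₙ⟩ + j(v) − j(uₙ) ≥ ⟨fₙ, v−uₙ⟩ for all v ∈ V. Then u solves the variational inequality with right-hand side f. -/
/-!
Test the inequality for `uₙ` against a fixed `v`. Monotonicity `A (uₙ - u) (uₙ - u) ≥ 0` replaces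
the quadratic term `A uₙ uₙ`, which does not pass to weak limits, by `A uₙ u + A u uₙ - A u u`,
giving `j uₙ ≤ A uₙ (v - u) - A u (uₙ - u) + j v - ⟪fₙ, ι (v - uₙ)⟫`. Every term on the right
converges: the `A`-terms by weak continuity of `A` and weak convergence of `uₙ`, the pairing
because the compact `ι` turns `uₙ ⇀ u` into norm convergence and a weakly convergent `fₙ` is
bounded. Finally a convex continuous `j` is the supremum of its continuous affine minorants, hence
weakly lower semicontinuous, so `j u` is at most the limit of the right-hand side.
-/

open Filter Topology

theorem exists_norm_le_of_forall_exists_norm_dual_le {𝕜 E ι : Type*} [RCLike 𝕜]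
    [NormedAddCommGroup E] [NormedSpace 𝕜 E] {x : ι → E}
    (hx : ∀ φ : StrongDual 𝕜 E, ∃ C, ∀ i, ‖φ (x i)‖ ≤ C) : ∃ C, ∀ i, ‖x i‖ ≤ C := by
  obtain ⟨C, hC⟩ :=
    banach_steinhaus (g := fun i => NormedSpace.inclusionInDoubleDual 𝕜 E (x i)) hx
  exact ⟨C, fun i => (NormedSpace.inclusionInDoubleDualLi 𝕜).norm_map (x i) ▸ hC i⟩

theorem tendsto_inner_of_forall_tendsto_inner {𝕜 E : Type*} [RCLike 𝕜] [NormedAddCommGroup E]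
    [InnerProductSpace 𝕜 E] [CompleteSpace E] {f g : ℕ → E} {f₀ g₀ : E}
    (hf : ∀ w, Tendsto (fun n => inner 𝕜 (f n) w) atTop (𝓝 (inner 𝕜 f₀ w)))
    (hg : Tendsto g atTop (𝓝 g₀)) :
    Tendsto (fun n => inner 𝕜 (f n) (g n)) atTop (𝓝 (inner 𝕜 f₀ g₀)) := by
  obtain ⟨C, hC⟩ := exists_norm_le_of_forall_exists_norm_dual_le (𝕜 := 𝕜) (x := f) fun φ => by
    obtain ⟨C, hC⟩ := (hf ((InnerProductSpace.toDual 𝕜 E).symm φ)).norm.bddAbove_range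
    refine ⟨C, fun n => ?_⟩
    rw [← InnerProductSpace.toDual_symm_apply, norm_inner_symm]
    exact hC ⟨n, rfl⟩
  have hsmall : Tendsto (fun n => inner 𝕜 (f n) (g n - g₀)) atTop (𝓝 0) := by
    refine squeeze_zero_norm (fun n => (norm_inner_le_norm _ _).trans
      (mul_le_mul_of_nonneg_right (hC n) (norm_nonneg _))) ?_
    simpa using (tendsto_iff_norm_sub_tendsto_zero.1 hg).const_mul C
  simpa [inner_sub_right] using hsmall.add (hf g₀)

theorem IsCompactOperator.tendsto_of_forall_tendsto_dual {𝕜 E F : Type*} [RCLike 𝕜]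
    [NormedAddCommGroup E] [NormedSpace 𝕜 E] [NormedAddCommGroup F] [NormedSpace 𝕜 F]
    {T : E →L[𝕜] F} (hT : IsCompactOperator T) {x : ℕ → E} {x₀ : E}
    (hx : ∀ φ : StrongDual 𝕜 E, Tendsto (fun n => φ (x n)) atTop (𝓝 (φ x₀))) :
    Tendsto (fun n => T (x n)) atTop (𝓝 (T x₀)) := by
  obtain ⟨C, hC⟩ := exists_norm_le_of_forall_exists_norm_dual_le fun φ =>
    let ⟨C, hC⟩ := (hx φ).norm.bddAbove_range; ⟨C, fun n => hC ⟨n, rfl⟩⟩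
  obtain ⟨K, hK, hTK⟩ :=
    hT.image_subset_compact_of_bounded (Metric.isBounded_closedBall (x := 0) (r := C))
  -- In the compact `K` it suffices that every cluster point `a` is `T x₀`; the functionals
  -- separate points, and `φ a` is a cluster point of the convergent sequence `φ (T (x n))`.
  refine hK.tendsto_nhds_of_unique_mapClusterPt
    (Eventually.of_forall fun n => hTK ⟨x n, mem_closedBall_zero_iff.2 (hC n), rfl⟩)
    fun a _ ha => ?_
  refine (SeparatingDual.eq_iff_forall_dual_eq (R := 𝕜)).2 fun φ => eq_of_nhds_neBot ?_
  exact ClusterPt.mono (ha.tendsto_comp (φ.continuous.tendsto a)) (hx (φ.comp T))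

theorem ConvexOn.le_of_forall_tendsto_dual {E ι : Type*} [AddCommGroup E] [Module ℝ E]
    [TopologicalSpace E] [IsTopologicalAddGroup E] [ContinuousSMul ℝ E] [LocallyConvexSpace ℝ E]
    {φ : E → ℝ} (hφcv : ConvexOn ℝ Set.univ φ) (hφc : LowerSemicontinuous φ)
    {l : Filter ι} [l.NeBot] {x : ι → E} {x₀ : E}
    (hx : ∀ g : StrongDual ℝ E, Tendsto (fun i => g (x i)) l (𝓝 (g x₀)))
    {t : ι → ℝ} {L : ℝ} (ht : Tendsto t l (𝓝 L)) (hle : ∀ i, φ (x i) ≤ t i) : φ x₀ ≤ L := by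
  refine le_of_forall_lt_imp_le_of_dense fun a ha => ?_
  obtain ⟨g, c, hgφ, hga⟩ := hφcv.exists_affine_le_of_lt (𝕜 := ℝ) (Set.mem_univ x₀) ha
    isClosed_univ (hφc.lowerSemicontinuousOn _)
  have hmin : ∀ y, g y + c ≤ φ y := fun y => hgφ ⟨y, Set.mem_univ y⟩
  simp only [RCLike.re_to_real] at hga
  exact hga ▸ le_of_tendsto_of_tendsto' ((hx g).add_const c) ht fun i => (hmin _).trans (hle i)

theorem apply_sub_le_of_forall_apply_self_nonneg {V : Type*} [AddCommGroup V] [Module ℝ V]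
    [TopologicalSpace V] (A : V →L[ℝ] V →L[ℝ] ℝ) (hA : ∀ w, 0 ≤ A w w) (x y v : V) :
    A x (v - x) ≤ A x (v - y) - A y (x - y) := by
  have := hA (x - y)
  simp only [map_sub, sub_apply] at this ⊢
  linarith

theorem stmt_5_general
    {V H : Type*} [NormedAddCommGroup V] [InnerProductSpace ℝ V]
    [NormedAddCommGroup H] [InnerProductSpace ℝ H] [CompleteSpace H]
    (ι : V →L[ℝ] H) (hιcpt : IsCompactOperator ι)
    (A : V →L[ℝ] (V →L[ℝ] ℝ)) (c : ℝ) (hc : 0 < c)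
    (hcoer : ∀ v : V, c * ‖v‖ ^ 2 ≤ A v v)
    (hAwsc : ∀ (w : V) (x : ℕ → V) (x₀ : V),
      (∀ φ : V →L[ℝ] ℝ, Tendsto (fun n => φ (x n)) atTop (𝓝 (φ x₀))) →
      Tendsto (fun n => A (x n) w) atTop (𝓝 (A x₀ w)))
    (j : V → ℝ) (hjconv : ConvexOn ℝ Set.univ j) (hjcont : Continuous j)
    (fseq : ℕ → H) (f : H) (useq : ℕ → V) (u : V)
    (hfweak : ∀ w : H, Tendsto (fun n => (inner ℝ (fseq n) w : ℝ)) atTop (𝓝 (inner ℝ f w : ℝ)))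
    (huweak : ∀ φ : V →L[ℝ] ℝ, Tendsto (fun n => φ (useq n)) atTop (𝓝 (φ u)))
    (hVI : ∀ n, ∀ v : V,
      A (useq n) (v - useq n) + j v - j (useq n) ≥ (inner ℝ (fseq n) (ι (v - useq n)) : ℝ)) :
    ∀ v : V, A u (v - u) + j v - j u ≥ (inner ℝ f (ι (v - u)) : ℝ) := by
  intro v
  have hA : ∀ w, 0 ≤ A w w := fun w => (by positivity : 0 ≤ c * ‖w‖ ^ 2).trans (hcoer w)
  have hbound : ∀ n, j (useq n) ≤
      A (useq n) (v - u) - A u (useq n - u) + j v - inner ℝ (fseq n) (ι (v - useq n)) := fun n =>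
    by linarith [hVI n v, apply_sub_le_of_forall_apply_self_nonneg A hA (useq n) u v]
  have hιu : Tendsto (fun n => ι (v - useq n)) atTop (𝓝 (ι (v - u))) := by
    simpa only [map_sub] using
      tendsto_const_nhds.sub (hιcpt.tendsto_of_forall_tendsto_dual huweak)
  have hAu : Tendsto (fun n => A u (useq n - u)) atTop (𝓝 0) := by
    simpa using (huweak (A u)).sub_const (A u u)
  have hlim : Tendsto
      (fun n => A (useq n) (v - u) - A u (useq n - u) + j v - inner ℝ (fseq n) (ι (v - useq n)))
      atTop (𝓝 (A u (v - u) + j v - inner ℝ f (ι (v - u)))) := by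
    simpa using (((hAwsc (v - u) useq u huweak).sub hAu).add_const (j v)).sub
      (tendsto_inner_of_forall_tendsto_inner hfweak hιu)
  have hju := hjconv.le_of_forall_tendsto_dual hjcont.lowerSemicontinuous huweak hlim hbound
  linarith

/-- Stability of the variational inequality of the second kind under weak convergence of data:
if `fₙ ⇀ f` weakly in `H`, `uₙ ⇀ u` weakly in `V`, `V` is compactly embedded in `H` via `ι`,
`A` is weakly sequentially continuous and `j` is convex continuous, and each `uₙ` solves the VI
with right-hand side `fₙ`, then `u` solves the VI with right-hand side `f`. -/
theorem stmt_5
    {V H : Type*} [NormedAddCommGroup V] [InnerProductSpace ℝ V] [CompleteSpace V]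
    [NormedAddCommGroup H] [InnerProductSpace ℝ H] [CompleteSpace H]
    (ι : V →L[ℝ] H) (hιcpt : IsCompactOperator ι)
    (hιinj : Function.Injective ι) (hιdense : DenseRange ι)
    (A : V →L[ℝ] (V →L[ℝ] ℝ)) (c : ℝ) (hc : 0 < c)
    (hcoer : ∀ v : V, c * ‖v‖ ^ 2 ≤ A v v)
    (hAwsc : ∀ (w : V) (x : ℕ → V) (x₀ : V),
      (∀ φ : V →L[ℝ] ℝ, Tendsto (fun n => φ (x n)) atTop (𝓝 (φ x₀))) →
      Tendsto (fun n => A (x n) w) atTop (𝓝 (A x₀ w)))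
    (j : V → ℝ) (hjconv : ConvexOn ℝ Set.univ j) (hjcont : Continuous j)
    (fseq : ℕ → H) (f : H) (useq : ℕ → V) (u : V)
    (hfweak : ∀ w : H, Tendsto (fun n => (inner ℝ (fseq n) w : ℝ)) atTop (𝓝 (inner ℝ f w : ℝ)))
    (huweak : ∀ φ : V →L[ℝ] ℝ, Tendsto (fun n => φ (useq n)) atTop (𝓝 (φ u)))
    (hVI : ∀ n, ∀ v : V,
      A (useq n) (v - useq n) + j v - j (useq n) ≥ (inner ℝ (fseq n) (ι (v - useq n)) : ℝ)) :
    ∀ v : V, A u (v - u) + j v - j u ≥ (inner ℝ f (ι (v - u)) : ℝ) :=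
  stmt_5_general ι hιcpt A c hc hcoer hAwsc j hjconv hjcont fseq f useq u hfweak huweak hVI
end

section
/- Let V be a real Hilbert space, A : V → V' linear bounded coercive, and let j(v) = β·N(v) where N : V → ℝ is a seminorm-type convex positively homogeneous continuous function and β > 0. Then u solves the variational inequality ⟨Au, v−u⟩ + j(v) − j(u) ≥ ⟨f, v−u⟩ for all v ∈ V if and only if there exists q ∈ V' with ⟨Au, v⟩ + ⟨q, v⟩ = ⟨f, v⟩ for all v ∈ V, ⟨q, u⟩ = j(u), and ⟨q, v⟩ ≤ j(v) for all v ∈ V. -/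
/-- Primal-dual formulation: `u` solves the variational inequality of the second kind with
`j = β·N`, `N` a continuous nonnegative positively homogeneous convex function, iff there is a
multiplier `q ∈ V'` with `⟨Au,v⟩ + ⟨q,v⟩ = ⟨f,v⟩` for all `v`, `⟨q,u⟩ = j(u)` and
`⟨q,v⟩ ≤ j(v)` for all `v`. -/
theorem stmt_8
    {V : Type*} [NormedAddCommGroup V] [InnerProductSpace ℝ V] [CompleteSpace V]
    (A : V →L[ℝ] (V →L[ℝ] ℝ)) (c : ℝ) (hc : 0 < c)
    (hcoer : ∀ v : V, c * ‖v‖ ^ 2 ≤ A v v)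
    (N : V → ℝ) (hNconv : ConvexOn ℝ Set.univ N) (hNcont : Continuous N)
    (hNhom : ∀ t : ℝ, 0 ≤ t → ∀ v : V, N (t • v) = t * N v)
    (hNnonneg : ∀ v : V, 0 ≤ N v)
    (β : ℝ) (hβ : 0 < β) (f : V →L[ℝ] ℝ) (u : V) :
    (∀ v : V, A u (v - u) + β * N v - β * N u ≥ f (v - u)) ↔
      ∃ q : V →L[ℝ] ℝ,
        (∀ v : V, A u v + q v = f v) ∧ q u = β * N u ∧ ∀ v : V, q v ≤ β * N v := by
  have hN0 : N 0 = 0 := by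
    have := hNhom 0 le_rfl 0
    simpa using this
  constructor
  · intro h
    refine ⟨f - A u, fun v => by simp, ?_, ?_⟩
    · -- q u = β * N u
      have h0 := h 0
      have h2 := h ((2:ℝ) • u)
      have hN2 : N ((2:ℝ) • u) = 2 * N u := hNhom 2 (by norm_num) u
      simp only [zero_sub, map_neg, hN0] at h0
      have h2' : A u ((2:ℝ) • u - u) + β * (2 * N u) - β * N u ≥ f ((2:ℝ) • u - u) := by
        rwa [hN2] at h2
      have hsub : (2:ℝ) • u - u = u := by
        rw [two_smul]; abel
      rw [hsub] at h2'
      simp only [ContinuousLinearMap.sub_apply]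
      linarith
    · -- q v ≤ β * N v
      intro v
      have hv := h (v + u)
      have hsub : v + u - u = v := by abel
      rw [hsub] at hv
      have hN' : β * N (v + u) ≤ β * N v + β * N u := by
        have hconv := hNconv.2 (Set.mem_univ v) (Set.mem_univ u)
          (by norm_num : (0:ℝ) ≤ (1/2:ℝ)) (by norm_num : (0:ℝ) ≤ (1/2:ℝ)) (by norm_num)
        have hh : N ((1/2:ℝ) • (v + u)) ≤ (1/2:ℝ) * N v + (1/2:ℝ) * N u := by
          have : (1/2:ℝ) • v + (1/2:ℝ) • u = (1/2:ℝ) • (v + u) := by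
            rw [smul_add]
          rw [this] at hconv
          simpa using hconv
        have hh2 : N ((1/2:ℝ) • (v + u)) = (1/2:ℝ) * N (v + u) :=
          hNhom (1/2) (by norm_num) (v + u)
        rw [hh2] at hh
        nlinarith
      simp only [ContinuousLinearMap.sub_apply]
      have := hv
      linarith
  · rintro ⟨q, hq1, hq2, hq3⟩ v
    have h1 := hq1 (v - u)
    have h2 := hq3 v
    simp only [map_sub] at h1
    simp only [map_sub]
    linarith
end

section
/- Let β > 0 and γ > 0 with γ large enough that β − 1/(2γ) > 0. Define the local regularization φ_γ' : ℝ → ℝ by φ_γ'(x) = β·x/|x| if γ|x| ≥ β + 1/(2γ); φ_γ'(x) = (x/|x|)(β − (γ/2)(β − γ|x| + 1/(2γ))²) if β − 1/(2γ) ≤ γ|x| ≤ β + 1/(2γ); and φ_γ'(x) = γx if γ|x| ≤ β − 1/(2γ). Then φ_γ' is continuously differentiable on ℝ, monotone nondecreasing, and satisfies |φ_γ'(x)| ≤ β for all x ∈ ℝ. -/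
/-!
On `x ≥ 0` the function is `γ x`, then a quadratic, then the constant `β`. The derivative
`γ² (β + 1/(2γ) - γ x)` of the quadratic falls from `γ` to `0` across the middle interval, so the
one-sided derivatives agree at both breakpoints and the derivative is that expression clamped to
`[0, γ]`: continuous and nonnegative. Oddness carries this over to `x < 0`. Being monotone and
equal to `±β` far out, the function stays in `[-β, β]`.
-/

section

variable {𝕜 F : Type*} [NontriviallyNormedField 𝕜] [NormedAddCommGroup F] [NormedSpace 𝕜 F]
  {f g : 𝕜 → F} {f' : F} {s : Set 𝕜} {x : 𝕜}

theorem Function.Odd.hasDerivAt_neg (hf : Function.Odd f) (h : HasDerivAt f f' x) :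
    HasDerivAt f f' (-x) := by
  rw [← neg_neg x] at h
  have := (h.scomp (-x) (_root_.hasDerivAt_neg (-x))).neg
  simp only [neg_smul, one_smul, neg_neg] at this
  convert this using 1
  funext y
  simp [hf y]

theorem hasDerivWithinAt_of_isClosed_of_eqOn (hs : IsClosed s) (hfg : Set.EqOn f g s)
    (hg : x ∈ s → HasDerivAt g f' x) : HasDerivWithinAt f f' s x := by
  by_cases hx : x ∈ s
  · exact (hg hx).hasDerivWithinAt.congr hfg (hfg hx)
  · exact HasFDerivWithinAt.of_notMem_closure (by rwa [hs.closure_eq])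

end

theorem preimage_const_mul_Ioi_neg_subset (γ c d : ℝ) :
    (γ * ·) ⁻¹' Set.Ioi (-c) ⊆
      (fun y => γ * |y|) ⁻¹' Set.Iic c ∪ ((γ * ·) ⁻¹' Set.Icc c d ∪ (γ * ·) ⁻¹' Set.Ici d) := by
  intro y hy
  simp only [Set.mem_union, Set.mem_preimage, Set.mem_Iic, Set.mem_Icc, Set.mem_Ici,
    Set.mem_Ioi] at hy ⊢
  rcases le_total (γ * y) c with h | h
  · left
    rcases le_total 0 y with hy0 | hy0
    · rwa [abs_of_nonneg hy0]
    · rw [abs_of_nonpos hy0]; linarith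
  · right
    rcases le_total (γ * y) d with h' | h'
    · exact Or.inl ⟨h, h'⟩
    · exact Or.inr h'

noncomputable def smoothedSign (β γ x : ℝ) : ℝ :=
  if β + 1 / (2 * γ) ≤ γ * |x| then β * (x / |x|)
  else if β - 1 / (2 * γ) ≤ γ * |x| then
    (x / |x|) * (β - (γ / 2) * (β - γ * |x| + 1 / (2 * γ)) ^ 2)
  else γ * x

noncomputable def smoothedSignDeriv (β γ x : ℝ) : ℝ :=
  min γ (max 0 (γ ^ 2 * (β + 1 / (2 * γ) - γ * |x|)))

section

variable {β γ x : ℝ}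

theorem smoothedSign_odd : Function.Odd (smoothedSign β γ) := by
  intro x
  simp only [smoothedSign, abs_neg]
  split_ifs <;> ring

theorem smoothedSignDeriv_even : Function.Even (smoothedSignDeriv β γ) := by
  intro x
  simp only [smoothedSignDeriv, abs_neg]

theorem continuous_smoothedSignDeriv : Continuous (smoothedSignDeriv β γ) := by
  unfold smoothedSignDeriv
  fun_prop

theorem smoothedSignDeriv_nonneg (hγ : 0 ≤ γ) : 0 ≤ smoothedSignDeriv β γ x :=
  le_min hγ (le_max_left _ _)

theorem smoothedSign_of_abs_le (hγ : 0 < γ) (h : γ * |x| ≤ β - 1 / (2 * γ)) :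
    smoothedSign β γ x = γ * x := by
  have hε : 0 < 1 / (2 * γ) := by positivity
  unfold smoothedSign
  rw [if_neg (by linarith)]
  rcases h.lt_or_eq with h | h
  · rw [if_neg h.not_ge]
  · rw [if_pos h.ge, show β = γ * |x| + 1 / (2 * γ) by linarith]
    rcases eq_or_ne x 0 with rfl | hx
    · simp
    · field_simp
      ring

theorem smoothedSign_of_le_of_le (hγ : 0 < γ) (hlarge : 0 < β - 1 / (2 * γ))
    (h₁ : β - 1 / (2 * γ) ≤ γ * x) (h₂ : γ * x ≤ β + 1 / (2 * γ)) :
    smoothedSign β γ x = β - (γ / 2) * (β - γ * x + 1 / (2 * γ)) ^ 2 := by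
  have hx : 0 < x := pos_of_mul_pos_right (hlarge.trans_le h₁) hγ.le
  unfold smoothedSign
  rw [abs_of_pos hx, div_self hx.ne', one_mul, mul_one]
  rcases h₂.lt_or_eq with h₂ | h₂
  · rw [if_neg h₂.not_ge, if_pos h₁]
  · rw [if_pos h₂.ge, h₂]
    ring

theorem smoothedSign_of_le (hγ : 0 < γ) (hlarge : 0 < β - 1 / (2 * γ))
    (h : β + 1 / (2 * γ) ≤ γ * x) : smoothedSign β γ x = β := by
  have hε : 0 < 1 / (2 * γ) := by positivity
  have hx : 0 < x := pos_of_mul_pos_right (by linarith) hγ.le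
  rw [smoothedSign, abs_of_pos hx, if_pos h, div_self hx.ne', mul_one]

theorem smoothedSignDeriv_of_abs_le (hγ : 0 < γ) (h : γ * |x| ≤ β - 1 / (2 * γ)) :
    smoothedSignDeriv β γ x = γ := by
  have hγε : γ ^ 2 * (2 * (1 / (2 * γ))) = γ := by field_simp
  refine min_eq_left (le_max_of_le_right ?_)
  calc γ = γ ^ 2 * (2 * (1 / (2 * γ))) := hγε.symm
    _ ≤ γ ^ 2 * (β + 1 / (2 * γ) - γ * |x|) := by gcongr; linarith

theorem smoothedSignDeriv_of_le_of_le (hγ : 0 < γ) (h₁ : β - 1 / (2 * γ) ≤ γ * |x|)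
    (h₂ : γ * |x| ≤ β + 1 / (2 * γ)) :
    smoothedSignDeriv β γ x = γ ^ 2 * (β - γ * |x| + 1 / (2 * γ)) := by
  have hγε : γ ^ 2 * (2 * (1 / (2 * γ))) = γ := by field_simp
  have hupper : γ ^ 2 * (β + 1 / (2 * γ) - γ * |x|) ≤ γ := by
    calc _ ≤ γ ^ 2 * (2 * (1 / (2 * γ))) := by gcongr; linarith
      _ = γ := hγε
  rw [smoothedSignDeriv, max_eq_right (by nlinarith [sq_nonneg γ]), min_eq_right hupper]
  ring

theorem smoothedSignDeriv_of_le (hγ : 0 ≤ γ) (h : β + 1 / (2 * γ) ≤ γ * |x|) :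
    smoothedSignDeriv β γ x = 0 := by
  rw [smoothedSignDeriv, max_eq_left (by nlinarith [sq_nonneg γ]), min_eq_right hγ]

theorem hasDerivAt_smoothedSign_of_nonneg (hγ : 0 < γ) (hlarge : 0 < β - 1 / (2 * γ))
    (hx : 0 ≤ x) : HasDerivAt (smoothedSign β γ) (smoothedSignDeriv β γ x) x := by
  set inner : Set ℝ := (fun y => γ * |y|) ⁻¹' Set.Iic (β - 1 / (2 * γ))
  set middle : Set ℝ := (γ * ·) ⁻¹' Set.Icc (β - 1 / (2 * γ)) (β + 1 / (2 * γ))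
  set outer : Set ℝ := (γ * ·) ⁻¹' Set.Ici (β + 1 / (2 * γ))
  have h_inner : HasDerivWithinAt (smoothedSign β γ) (smoothedSignDeriv β γ x) inner x := by
    refine hasDerivWithinAt_of_isClosed_of_eqOn (isClosed_Iic.preimage (by fun_prop))
      (fun y hy => smoothedSign_of_abs_le hγ hy) fun hx' => ?_
    rw [smoothedSignDeriv_of_abs_le hγ hx']
    exact hasDerivAt_const_mul γ
  have h_middle : HasDerivWithinAt (smoothedSign β γ) (smoothedSignDeriv β γ x) middle x := by
    refine hasDerivWithinAt_of_isClosed_of_eqOn (isClosed_Icc.preimage (by fun_prop))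
      (fun y hy => smoothedSign_of_le_of_le hγ hlarge hy.1 hy.2) fun hx' => ?_
    obtain ⟨h₁, h₂⟩ : β - 1 / (2 * γ) ≤ γ * |x| ∧ γ * |x| ≤ β + 1 / (2 * γ) := by
      rwa [abs_of_nonneg hx]
    rw [smoothedSignDeriv_of_le_of_le hγ h₁ h₂, abs_of_nonneg hx]
    have hlin : HasDerivAt (fun y => β - γ * y + 1 / (2 * γ)) (-γ) x := by
      simpa using ((hasDerivAt_const_mul γ).const_sub β).add_const (1 / (2 * γ))
    exact (((hlin.pow 2).const_mul (γ / 2)).const_sub β).congr_deriv (by norm_num; ring)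
  have h_outer : HasDerivWithinAt (smoothedSign β γ) (smoothedSignDeriv β γ x) outer x := by
    refine hasDerivWithinAt_of_isClosed_of_eqOn (isClosed_Ici.preimage (by fun_prop))
      (fun y hy => smoothedSign_of_le hγ hlarge hy) fun hx' => ?_
    rw [smoothedSignDeriv_of_le hγ.le (by rwa [abs_of_nonneg hx])]
    exact hasDerivAt_const x β
  have h_nhds : inner ∪ (middle ∪ outer) ∈ nhds x :=
    Filter.mem_of_superset ((isOpen_Ioi.preimage (continuous_const_mul γ)).mem_nhds
      (show -(β - 1 / (2 * γ)) < γ * x by nlinarith)) (preimage_const_mul_Ioi_neg_subset γ _ _)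
  exact (h_inner.union (h_middle.union h_outer)).hasDerivAt h_nhds

theorem hasDerivAt_smoothedSign (hγ : 0 < γ) (hlarge : 0 < β - 1 / (2 * γ)) (x : ℝ) :
    HasDerivAt (smoothedSign β γ) (smoothedSignDeriv β γ x) x := by
  rcases le_total 0 x with hx | hx
  · exact hasDerivAt_smoothedSign_of_nonneg hγ hlarge hx
  · have := smoothedSign_odd.hasDerivAt_neg
      (hasDerivAt_smoothedSign_of_nonneg hγ hlarge (neg_nonneg.mpr hx))
    rwa [neg_neg, smoothedSignDeriv_even] at this

theorem deriv_smoothedSign (hγ : 0 < γ) (hlarge : 0 < β - 1 / (2 * γ)) :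
    deriv (smoothedSign β γ) = smoothedSignDeriv β γ :=
  funext fun x => (hasDerivAt_smoothedSign hγ hlarge x).deriv

theorem differentiable_smoothedSign (hγ : 0 < γ) (hlarge : 0 < β - 1 / (2 * γ)) :
    Differentiable ℝ (smoothedSign β γ) :=
  fun x => (hasDerivAt_smoothedSign hγ hlarge x).differentiableAt

theorem contDiff_smoothedSign (hγ : 0 < γ) (hlarge : 0 < β - 1 / (2 * γ)) :
    ContDiff ℝ 1 (smoothedSign β γ) :=
  contDiff_one_iff_deriv.mpr ⟨differentiable_smoothedSign hγ hlarge,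
    deriv_smoothedSign hγ hlarge ▸ continuous_smoothedSignDeriv⟩

theorem monotone_smoothedSign (hγ : 0 < γ) (hlarge : 0 < β - 1 / (2 * γ)) :
    Monotone (smoothedSign β γ) :=
  monotone_of_deriv_nonneg (differentiable_smoothedSign hγ hlarge) fun x => by
    rw [deriv_smoothedSign hγ hlarge]
    exact smoothedSignDeriv_nonneg hγ.le

theorem abs_smoothedSign_le (hγ : 0 < γ) (hlarge : 0 < β - 1 / (2 * γ)) (x : ℝ) :
    |smoothedSign β γ x| ≤ β := by
  set b := (β + 1 / (2 * γ)) / γ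
  have hb : β + 1 / (2 * γ) ≤ γ * max |x| b := by
    rw [← div_le_iff₀' hγ]
    exact le_max_right _ _
  have hsat : smoothedSign β γ (max |x| b) = β := smoothedSign_of_le hγ hlarge hb
  have hmono := monotone_smoothedSign hγ hlarge
  rw [abs_le]
  constructor
  · have := hmono (neg_le_of_abs_le (le_max_left |x| b))
    rwa [smoothedSign_odd, hsat] at this
  · have := hmono ((le_abs_self x).trans (le_max_left |x| b))
    rwa [hsat] at this

end

theorem stmt_10_general (β γ : ℝ) (hγ : 0 < γ) (hlarge : 0 < β - 1 / (2 * γ))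
    (φ : ℝ → ℝ)
    (hφ : ∀ x : ℝ, φ x =
      if β + 1 / (2 * γ) ≤ γ * |x| then β * (x / |x|)
      else if β - 1 / (2 * γ) ≤ γ * |x| then
        (x / |x|) * (β - (γ / 2) * (β - γ * |x| + 1 / (2 * γ)) ^ 2)
      else γ * x) :
    ContDiff ℝ 1 φ ∧ Monotone φ ∧ ∀ x : ℝ, |φ x| ≤ β := by
  obtain rfl : φ = smoothedSign β γ := funext hφ
  exact ⟨contDiff_smoothedSign hγ hlarge, monotone_smoothedSign hγ hlarge,
    abs_smoothedSign_le hγ hlarge⟩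

/-- The tailored local regularization `φ_γ'` of the sign of `x ↦ β|x|`: it is piecewise defined,
continuously differentiable, monotone nondecreasing, and bounded by `β` in absolute value. -/
theorem stmt_10 (β γ : ℝ) (hβ : 0 < β) (hγ : 0 < γ) (hlarge : 0 < β - 1 / (2 * γ))
    (φ : ℝ → ℝ)
    (hφ : ∀ x : ℝ, φ x =
      if β + 1 / (2 * γ) ≤ γ * |x| then β * (x / |x|)
      else if β - 1 / (2 * γ) ≤ γ * |x| then
        (x / |x|) * (β - (γ / 2) * (β - γ * |x| + 1 / (2 * γ)) ^ 2)
      else γ * x) :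
    ContDiff ℝ 1 φ ∧ Monotone φ ∧ ∀ x : ℝ, |φ x| ≤ β :=
  stmt_10_general β γ hγ hlarge φ hφ
end
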